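/- arXiv:physics/0206001 — 5 statements merged into one kernel-verified Lean document; each statement's English description precedes it below -/
import Mathlib

section
/- Let L ≠ 0 and let W : ℝ → ℝ be arbitrary. If (θ, ψ) with ψ ≥ 0 satisfies ψ' = ψ under the tokamap (in particular if it is a fixed point of the tokamap modulo 1), then ψ = 0 or sin(2πθ) = 0. Hence all fixed points of the tokamap lie either on the polar axis ψ = 0 or in the equatorial plane (θ congruent to 0 or 1/2 modulo 1). -/
/-- The ψ-component of the tokamap with stochasticity parameter `L`. -/
noncomputable def tokamapPsi (L θ ψ : ℝ) : ℝ :=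
  (1 / 2) * ((ψ - 1 - L * Real.sin (2 * Real.pi * θ)) +
    Real.sqrt ((ψ - 1 - L * Real.sin (2 * Real.pi * θ)) ^ 2 + 4 * ψ))

/-- For `L ≠ 0` and arbitrary profile `W`, if `ψ ≥ 0` is fixed by the
ψ-component of the tokamap (in particular at any fixed point of the tokamap modulo 1),
then `ψ = 0` or `sin (2πθ) = 0`; hence all fixed points lie either on the polar axis
`ψ = 0` or in the equatorial plane (`θ` congruent to `0` or `1/2` modulo `1`,
i.e. `θ = k/2` for some integer `k`). -/
theorem stmt2 (L : ℝ) (hL : L ≠ 0) (W : ℝ → ℝ) (θ ψ : ℝ) (hψ : 0 ≤ ψ)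
    (h : tokamapPsi L θ ψ = ψ) :
    (ψ = 0 ∨ Real.sin (2 * Real.pi * θ) = 0) ∧
    (ψ = 0 ∨ ∃ k : ℤ, θ = (k : ℝ) / 2) := by
  set s := Real.sin (2 * Real.pi * θ) with hs
  set P := ψ - 1 - L * s with hP
  have hsqrt : Real.sqrt (P ^ 2 + 4 * ψ) = 2 * ψ - P := by
    unfold tokamapPsi at h
    rw [← hs, ← hP] at h
    linarith
  have hsq : P ^ 2 + 4 * ψ = (2 * ψ - P) ^ 2 := by
    have := Real.sq_sqrt (by positivity : (0:ℝ) ≤ P ^ 2 + 4 * ψ)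
    rw [hsqrt] at this
    linarith
  have key : ψ * (L * s) = 0 := by nlinarith [hsq]
  have hmain : ψ = 0 ∨ s = 0 := by
    rcases mul_eq_zero.mp key with h1 | h1
    · exact Or.inl h1
    · exact Or.inr ((mul_eq_zero.mp h1).resolve_left hL)
  refine ⟨hmain, ?_⟩
  rcases hmain with h1 | h1
  · exact Or.inl h1
  · right
    rw [hs, Real.sin_eq_zero_iff] at h1
    obtain ⟨n, hn⟩ := h1
    exact ⟨n, by field_simp at hn ⊢; nlinarith [Real.pi_pos, hn]⟩
end

section
/- For every ψ ≥ 0 and for θ = 0 or θ = 1/2, the tokamap fixes the ψ-coordinate: ψ' = ψ (using that (ψ − 1)² + 4ψ = (ψ + 1)²). Moreover, (0, ψ) is a fixed point of the tokamap modulo 1 if and only if W(ψ) − (L/(2π))/(1+ψ)² is an integer, and (1/2, ψ) is a fixed point of the tokamap modulo 1 if and only if W(ψ) + (L/(2π))/(1+ψ)² is an integer. -/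
/-- The θ-component of the tokamap with profile `W` and parameter `L`. -/
noncomputable def tokamapTheta (W : ℝ → ℝ) (L θ ψ : ℝ) : ℝ :=
  θ + W (tokamapPsi L θ ψ) -
    (L / (2 * Real.pi)) * Real.cos (2 * Real.pi * θ) / (1 + tokamapPsi L θ ψ) ^ 2

/-- `(θ, ψ)` is a fixed point of the tokamap modulo 1: `ψ' = ψ` and `θ' − θ ∈ ℤ`. -/
def IsTokamapFixedPt (W : ℝ → ℝ) (L θ ψ : ℝ) : Prop :=
  tokamapPsi L θ ψ = ψ ∧ ∃ n : ℤ, tokamapTheta W L θ ψ - θ = (n : ℝ)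

lemma sqrtkey (ψ : ℝ) (hψ : 0 ≤ ψ) : Real.sqrt ((ψ - 1) ^ 2 + 4 * ψ) = ψ + 1 := by
  have : (ψ - 1) ^ 2 + 4 * ψ = (ψ + 1) ^ 2 := by ring
  rw [this, Real.sqrt_sq (by linarith)]

lemma psi0 (L ψ : ℝ) (hψ : 0 ≤ ψ) : tokamapPsi L 0 ψ = ψ := by
  simp [tokamapPsi, sqrtkey ψ hψ]; ring

lemma psihalf (L ψ : ℝ) (hψ : 0 ≤ ψ) : tokamapPsi L (1 / 2) ψ = ψ := by
  have h : 2 * Real.pi * (1 / 2) = Real.pi := by ring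
  rw [tokamapPsi, h, Real.sin_pi]
  simp [sqrtkey ψ hψ]; ring

/-- For every `ψ ≥ 0` and `θ = 0` or `θ = 1/2` the tokamap fixes the
ψ-coordinate, and `(0, ψ)` (resp. `(1/2, ψ)`) is a fixed point of the tokamap modulo 1
iff `W(ψ) − (L/(2π))/(1+ψ)²` (resp. `W(ψ) + (L/(2π))/(1+ψ)²`) is an integer. -/
theorem stmt3 (L : ℝ) (W : ℝ → ℝ) (ψ : ℝ) (hψ : 0 ≤ ψ) :
    tokamapPsi L 0 ψ = ψ ∧
    tokamapPsi L (1 / 2) ψ = ψ ∧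
    (IsTokamapFixedPt W L 0 ψ ↔
      ∃ n : ℤ, W ψ - (L / (2 * Real.pi)) / (1 + ψ) ^ 2 = (n : ℝ)) ∧
    (IsTokamapFixedPt W L (1 / 2) ψ ↔
      ∃ n : ℤ, W ψ + (L / (2 * Real.pi)) / (1 + ψ) ^ 2 = (n : ℝ)) := by
  have h0 := psi0 L ψ hψ
  have hh := psihalf L ψ hψ
  have hπ : 2 * Real.pi * (1 / 2) = Real.pi := by ring
  refine ⟨h0, hh, ?_, ?_⟩
  · constructor
    · rintro ⟨-, n, hn⟩
      refine ⟨n, ?_⟩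
      rw [tokamapTheta, h0] at hn
      simp at hn
      linarith
    · rintro ⟨n, hn⟩
      refine ⟨h0, n, ?_⟩
      rw [tokamapTheta, h0]
      simp
      linarith
  · constructor
    · rintro ⟨-, n, hn⟩
      refine ⟨n, ?_⟩
      rw [tokamapTheta, hh, hπ] at hn
      simp [neg_div] at hn
      linarith
    · rintro ⟨n, hn⟩
      refine ⟨hh, n, ?_⟩
      rw [tokamapTheta, hh, hπ]
      simp [neg_div]
      linarith
end

section
/- Let W(ψ) = (2 − ψ)(2 − 2ψ + ψ²)/4 and let 0 < L < 6π. Then there exists a unique ψ_MA ∈ (0, 1) such that W(ψ_MA) + (L/(2π))/(1 + ψ_MA)² = 1; consequently (θ, ψ) = (1/2, ψ_MA) is a fixed point of the tokamap modulo 1 (the Shafranov-shifted magnetic axis). -/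
/-- For the standard profile `W(ψ) = (2−ψ)(2−2ψ+ψ²)/4` and `0 < L < 6π`,
there is a unique `ψ_MA ∈ (0,1)` with `W(ψ_MA) + (L/(2π))/(1+ψ_MA)² = 1`; consequently
`(1/2, ψ_MA)` is a fixed point of the tokamap modulo 1 (the Shafranov-shifted
magnetic axis). -/
theorem stmt4 (L : ℝ) (hL : 0 < L) (hL' : L < 6 * Real.pi)
    (W : ℝ → ℝ) (hW : ∀ ψ, W ψ = (2 - ψ) * (2 - 2 * ψ + ψ ^ 2) / 4) :
    (∃! ψMA : ℝ, ψMA ∈ Set.Ioo (0 : ℝ) 1 ∧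
        W ψMA + (L / (2 * Real.pi)) / (1 + ψMA) ^ 2 = 1) ∧
    (∀ ψMA : ℝ, ψMA ∈ Set.Ioo (0 : ℝ) 1 →
        W ψMA + (L / (2 * Real.pi)) / (1 + ψMA) ^ 2 = 1 →
        IsTokamapFixedPt W L (1 / 2) ψMA) := by
  have hπ : 0 < Real.pi := Real.pi_pos
  set c : ℝ := L / (2 * Real.pi) with hc
  have hc0 : 0 < c := div_pos hL (by positivity)
  have hc3 : c < 3 := by
    rw [hc, div_lt_iff₀ (by positivity)]; linarith
  set g : ℝ → ℝ := fun ψ => (2 - ψ) * (2 - 2 * ψ + ψ ^ 2) / 4 + c / (1 + ψ) ^ 2 with hg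
  have hgW : ∀ ψ, W ψ + c / (1 + ψ) ^ 2 = g ψ := fun ψ => by rw [hW]
  have hanti : StrictAntiOn g (Set.Icc (0 : ℝ) 1) := by
    intro x hx y hy hxy
    have h1 : (2 - y) * (2 - 2 * y + y ^ 2) / 4 < (2 - x) * (2 - 2 * x + x ^ 2) / 4 := by
      nlinarith [sq_nonneg (x + y - 2), sq_nonneg (x - y), hx.1, hx.2, hy.1, hy.2]
    have hx1 : (0:ℝ) < (1 + x) ^ 2 := by nlinarith [hx.1]
    have h2 : c / (1 + y) ^ 2 < c / (1 + x) ^ 2 :=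
      div_lt_div_of_pos_left hc0 hx1 (by nlinarith [hx.1, hy.1])
    simpa [hg] using add_lt_add h1 h2
  have hcont : ContinuousOn g (Set.Icc (0 : ℝ) 1) := by
    apply ContinuousOn.add
    · exact (Continuous.continuousOn (by continuity))
    · apply ContinuousOn.div continuousOn_const (Continuous.continuousOn (by continuity))
      intro x hx
      have : (0:ℝ) < 1 + x := by linarith [hx.1]
      positivity
  have hmem : (1:ℝ) ∈ Set.Ioo (g 1) (g 0) := by
    constructor
    · show g 1 < 1
      simp only [hg]
      norm_num
      linarith
    · show 1 < g 0
      simp only [hg]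
      norm_num
      linarith
  obtain ⟨ψ, hψ, hgψ⟩ := intermediate_value_Ioo' (zero_le_one) hcont hmem
  constructor
  · refine ⟨ψ, ⟨hψ, by rw [hgW]; exact hgψ⟩, ?_⟩
    rintro y ⟨hy, hgy⟩
    rw [hgW] at hgy
    exact hanti.injOn (Set.Ioo_subset_Icc_self hy) (Set.Ioo_subset_Icc_self hψ)
      (hgy.trans hgψ.symm)
  · intro p hp heq
    have hsin : Real.sin (2 * Real.pi * (1 / 2)) = 0 := by
      rw [show 2 * Real.pi * (1/2 : ℝ) = Real.pi by ring, Real.sin_pi]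
    have hcos : Real.cos (2 * Real.pi * (1 / 2)) = -1 := by
      rw [show 2 * Real.pi * (1/2 : ℝ) = Real.pi by ring, Real.cos_pi]
    have hpsi : tokamapPsi L (1 / 2) p = p := by
      rw [tokamapPsi, hsin]
      have h1 : (p - 1 - L * 0) ^ 2 + 4 * p = (p + 1) ^ 2 := by ring
      rw [h1, Real.sqrt_sq (by linarith [hp.1])]
      ring
    refine ⟨hpsi, 1, ?_⟩
    rw [tokamapTheta, hpsi, hcos]
    have : W p + c / (1 + p) ^ 2 = 1 := heq
    push_cast
    linarith [this, (by ring : L / (2 * Real.pi) * (-1) / (1 + p) ^ 2 = -(c / (1 + p) ^ 2))]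
end

section
/- Let 0 < L < 1 and W(ψ) = (2 − ψ)(2 − 2ψ + ψ²)/4. (i) For every u ≥ 0 and every θ ∈ ℝ one has (1/4)·(−6 + 8u − 3u²) + (L/π)·cos(2πθ)/(1+u)³ < 0. (ii) Consequently, for every θ ∈ ℝ and every ψ ≥ 0 the partial derivative with respect to ψ of the θ-component of the tokamap, namely ∂θ'/∂ψ = [W'(ψ'(θ,ψ)) + (L/π)·cos(2πθ)/(1+ψ'(θ,ψ))³]·∂ψ'/∂ψ with W'(ψ) = (−6 + 8ψ − 3ψ²)/4, is strictly negative; that is, the tokamap is a left twist map. -/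
lemma aux_poly (u : ℝ) (hu : 0 ≤ u) : 6 ≤ (6 - 8*u + 3*u^2) * (1+u)^3 := by
  have hq : 0 ≤ 3*u^4 + u^3 - 9*u^2 - 3*u + 10 := by
    nlinarith [sq_nonneg (u^2 - 1), sq_nonneg (u^2 - 2), sq_nonneg (u-1),
      mul_nonneg hu (sq_nonneg (u-1)), mul_nonneg hu (sq_nonneg (u+1)),
      sq_nonneg (u^2 - u - 1), sq_nonneg (u^2+u-2)]
  nlinarith [mul_nonneg hu hq]

lemma part1 (L : ℝ) (hL0 : 0 < L) (hL1 : L < 1) (u : ℝ) (hu : 0 ≤ u) (θ : ℝ) :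
    (1 / 4) * (-6 + 8 * u - 3 * u ^ 2) +
      (L / Real.pi) * Real.cos (2 * Real.pi * θ) / (1 + u) ^ 3 < 0 := by
  have hπ : (3 : ℝ) < Real.pi := Real.pi_gt_three
  have hu3 : (0:ℝ) < (1 + u) ^ 3 := by positivity
  have hc : Real.cos (2 * Real.pi * θ) ≤ 1 := Real.cos_le_one _
  have hLπ : L / Real.pi < 1 / 3 := by
    rw [div_lt_div_iff₀ (by linarith) (by norm_num)]; nlinarith
  have hLπ0 : 0 < L / Real.pi := by positivity
  have h1 : (L / Real.pi) * Real.cos (2 * Real.pi * θ) / (1 + u) ^ 3 ≤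
      (L / Real.pi) / (1 + u) ^ 3 := by
    gcongr
    nlinarith
  have h2 : (L / Real.pi) / (1 + u) ^ 3 < (1/3 : ℝ) / (1 + u) ^ 3 := by gcongr
  have h3 : (1/3 : ℝ) / (1 + u) ^ 3 ≤ -((1 / 4) * (-6 + 8 * u - 3 * u ^ 2)) := by
    rw [div_le_iff₀ hu3]
    nlinarith [aux_poly u hu]
  linarith

lemma psi_deriv (L : ℝ) (hL0 : 0 < L) (hL1 : L < 1) (θ ψ : ℝ) (hψ : 0 ≤ ψ) :
    HasDerivAt (fun p : ℝ => tokamapPsi L θ p)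
      ((1 / 2) * (1 + (ψ + 1 - L * Real.sin (2 * Real.pi * θ)) /
        Real.sqrt ((ψ - 1 - L * Real.sin (2 * Real.pi * θ)) ^ 2 + 4 * ψ))) ψ := by
  unfold tokamapPsi
  set s := L * Real.sin (2 * Real.pi * θ) with hs_def
  have hs : |s| ≤ L := by
    rw [hs_def, abs_mul, abs_of_pos hL0]
    nlinarith [Real.abs_sin_le_one (2 * Real.pi * θ), abs_nonneg (Real.sin (2*Real.pi*θ))]
  have hs1 : -1 < s := by cases abs_le.mp hs; linarith
  have hs2 : s < 1 := by cases abs_le.mp hs; linarith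
  have hD : 0 < (ψ - 1 - s) ^ 2 + 4 * ψ := by
    nlinarith [sq_nonneg ψ, sq_nonneg (1 + s), mul_nonneg hψ (by linarith : (0:ℝ) ≤ 1 - s)]
  have hsD : 0 < Real.sqrt ((ψ - 1 - s) ^ 2 + 4 * ψ) := Real.sqrt_pos.mpr hD
  have hP : HasDerivAt (fun p : ℝ => (p - 1 - s) ^ 2 + 4 * p) (2 * (ψ - 1 - s) + 4) ψ := by
    have h1 : HasDerivAt (fun p : ℝ => p - 1 - s) 1 ψ :=
      ((hasDerivAt_id ψ).sub_const 1).sub_const s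
    have := (h1.pow 2).add ((hasDerivAt_id ψ).const_mul 4)
    refine this.congr_deriv ?_; ring
  have hsq := hP.sqrt hD.ne'
  have := (((hasDerivAt_id ψ).sub_const 1).sub_const s).add hsq |>.const_mul (1/2 : ℝ)
  refine this.congr_deriv ?_
  have : Real.sqrt ((ψ - 1 - s) ^ 2 + 4 * ψ) ≠ 0 := hsD.ne'
  field_simp
  ring

/-- For `0 < L < 1` and `W(ψ) = (2−ψ)(2−2ψ+ψ²)/4`:
(i) for every `u ≥ 0` and every `θ`,
`(1/4)(−6+8u−3u²) + (L/π)cos(2πθ)/(1+u)³ < 0`;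
(ii) consequently, at every `θ` and every `ψ ≥ 0`, the θ-component of the tokamap has
partial derivative with respect to `ψ` equal to
`(W'(ψ') + (L/π)cos(2πθ)/(1+ψ')³)·∂ψ'/∂ψ` (with `W'(ψ) = (−6+8ψ−3ψ²)/4`), and this
derivative is strictly negative: the tokamap is a left twist map. -/
theorem stmt6 (L : ℝ) (hL0 : 0 < L) (hL1 : L < 1)
    (W : ℝ → ℝ) (hW : ∀ ψ, W ψ = (2 - ψ) * (2 - 2 * ψ + ψ ^ 2) / 4) :
    (∀ u : ℝ, 0 ≤ u → ∀ θ : ℝ,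
      (1 / 4) * (-6 + 8 * u - 3 * u ^ 2) +
        (L / Real.pi) * Real.cos (2 * Real.pi * θ) / (1 + u) ^ 3 < 0) ∧
    (∀ θ : ℝ, ∀ ψ : ℝ, 0 ≤ ψ →
      HasDerivAt (fun p : ℝ => tokamapTheta W L θ p)
        (((-6 + 8 * tokamapPsi L θ ψ - 3 * (tokamapPsi L θ ψ) ^ 2) / 4 +
            (L / Real.pi) * Real.cos (2 * Real.pi * θ) / (1 + tokamapPsi L θ ψ) ^ 3) *
          ((1 / 2) * (1 + (ψ + 1 - L * Real.sin (2 * Real.pi * θ)) /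
            Real.sqrt ((ψ - 1 - L * Real.sin (2 * Real.pi * θ)) ^ 2 + 4 * ψ)))) ψ ∧
      ((-6 + 8 * tokamapPsi L θ ψ - 3 * (tokamapPsi L θ ψ) ^ 2) / 4 +
            (L / Real.pi) * Real.cos (2 * Real.pi * θ) / (1 + tokamapPsi L θ ψ) ^ 3) *
          ((1 / 2) * (1 + (ψ + 1 - L * Real.sin (2 * Real.pi * θ)) /
            Real.sqrt ((ψ - 1 - L * Real.sin (2 * Real.pi * θ)) ^ 2 + 4 * ψ))) < 0) := by
  have hπ : (3 : ℝ) < Real.pi := Real.pi_gt_three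
  refine ⟨fun u hu θ => part1 L hL0 hL1 u hu θ, fun θ ψ hψ => ?_⟩
  set s := L * Real.sin (2 * Real.pi * θ) with hs_def
  set c := Real.cos (2 * Real.pi * θ) with hc_def
  have hs : |s| ≤ L := by
    rw [hs_def, abs_mul, abs_of_pos hL0]
    nlinarith [Real.abs_sin_le_one (2 * Real.pi * θ), abs_nonneg (Real.sin (2*Real.pi*θ))]
  have hs1 : -1 < s := by cases abs_le.mp hs; linarith
  have hs2 : s < 1 := by cases abs_le.mp hs; linarith
  have hD : 0 < (ψ - 1 - s) ^ 2 + 4 * ψ := by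
    nlinarith [sq_nonneg ψ, sq_nonneg (1 + s), mul_nonneg hψ (by linarith : (0:ℝ) ≤ 1 - s)]
  have hsD : 0 < Real.sqrt ((ψ - 1 - s) ^ 2 + 4 * ψ) := Real.sqrt_pos.mpr hD
  set g' : ℝ := (1 / 2) * (1 + (ψ + 1 - s) / Real.sqrt ((ψ - 1 - s) ^ 2 + 4 * ψ)) with hg'_def
  have hg : HasDerivAt (fun p : ℝ => tokamapPsi L θ p) g' ψ := psi_deriv L hL0 hL1 θ ψ hψ
  set G : ℝ := tokamapPsi L θ ψ with hG_def
  -- G ≥ 0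
  have hGnn : 0 ≤ G := by
    rw [hG_def, tokamapPsi]
    have h1 : |ψ - 1 - s| ≤ Real.sqrt ((ψ - 1 - s) ^ 2 + 4 * ψ) := by
      rw [← Real.sqrt_sq_eq_abs]
      exact Real.sqrt_le_sqrt (by linarith)
    have h2 := neg_abs_le (ψ - 1 - s)
    linarith
  have hG1 : 0 < 1 + G := by linarith
  have hg'pos : 0 < g' := by
    rw [hg'_def]
    have : 0 < (ψ + 1 - s) / Real.sqrt ((ψ - 1 - s) ^ 2 + 4 * ψ) :=
      div_pos (by linarith) hsD
    linarith
  -- derivative of the W-composition term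
  have hterm1 : HasDerivAt (fun p : ℝ => (2 - tokamapPsi L θ p) *
      (2 - 2 * tokamapPsi L θ p + (tokamapPsi L θ p) ^ 2) / 4)
      (((-6 + 8 * G - 3 * G ^ 2) / 4) * g') ψ := by
    have := (((hasDerivAt_const ψ (2:ℝ)).sub hg).mul
      (((hasDerivAt_const ψ (2:ℝ)).sub (hg.const_mul 2)).add (hg.pow 2))).div_const 4
    refine this.congr_deriv ?_
    simp only [Pi.sub_apply, Pi.add_apply, Pi.pow_apply, Pi.mul_apply]
    rw [← hG_def]; ring
  -- derivative of the last term
  have hterm2 := (hasDerivAt_const ψ ((L / (2 * Real.pi)) * c)).div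
      (((hasDerivAt_const ψ (1:ℝ)).add hg).pow 2) (pow_ne_zero 2 hG1.ne')
  have hfun : (fun p : ℝ => tokamapTheta W L θ p) = fun p : ℝ =>
      θ + (2 - tokamapPsi L θ p) * (2 - 2 * tokamapPsi L θ p + (tokamapPsi L θ p) ^ 2) / 4 -
        (L / (2 * Real.pi)) * c / (1 + tokamapPsi L θ p) ^ 2 := by
    funext p; rw [tokamapTheta, hW]
  have hderiv : HasDerivAt (fun p : ℝ => tokamapTheta W L θ p)
      (((-6 + 8 * G - 3 * G ^ 2) / 4 + (L / Real.pi) * c / (1 + G) ^ 3) * g') ψ := by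
    rw [hfun]
    have := ((hasDerivAt_const ψ θ).add hterm1).sub hterm2
    refine this.congr_deriv ?_
    have hπ0 : Real.pi ≠ 0 := Real.pi_ne_zero
    simp only [Pi.sub_apply, Pi.add_apply, Pi.pow_apply, Pi.mul_apply]
    rw [← hG_def]
    have hG1' : 1 + G ≠ 0 := hG1.ne'
    push_cast
    field_simp
    ring
  refine ⟨hderiv, ?_⟩
  have := part1 L hL0 hL1 G hGnn θ
  rw [← hc_def] at this
  have hf1 : (-6 + 8 * G - 3 * G ^ 2) / 4 + (L / Real.pi) * c / (1 + G) ^ 3 < 0 := by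
    linarith
  exact mul_neg_of_neg_of_pos hf1 hg'pos
end

section
/- (Action principle for quasiperiodic orbits.) Let F_a : ℝ × ℝ → ℝ be continuously differentiable with F_a(x + 1, y + 1) = F_a(x, y) for all x, y. Let ω ∈ (0, 1) be irrational, let θ : ℝ → ℝ be continuous with θ(t + 1) = θ(t) + 1 for all t, define ψ(t) = −∂₁F_a(θ(t), θ(t + ω)), and assume the orbit condition ψ(t + ω) = ∂₂F_a(θ(t), θ(t + ω)) for all t ∈ ℝ. Then for every continuous 1-periodic function η : ℝ → ℝ, the function ε ↦ ∫₀¹ F_a(θ(t) + ε·η(t), θ(t + ω) + ε·η(t + ω)) dt has derivative equal to 0 at ε = 0; i.e. θ is a stationary point of the Percival action functional 𝒜(θ) = ∫₀¹ F_a(θ(t), θ(t + ω)) dt. -/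
/-- action principle for quasiperiodic orbits: let `F_a` be C¹ with
`F_a(x+1, y+1) = F_a(x, y)`, let `ω ∈ (0,1)` be irrational, let `θ` be continuous
with `θ(t+1) = θ(t) + 1`, set `ψ(t) = −∂₁F_a(θ(t), θ(t+ω))`, and assume the orbit
condition `ψ(t+ω) = ∂₂F_a(θ(t), θ(t+ω))` for all `t`. Then for every continuous
1-periodic `η`, the function
`ε ↦ ∫₀¹ F_a(θ(t) + ε·η(t), θ(t+ω) + ε·η(t+ω)) dt` has derivative `0` at `ε = 0`:
`θ` is a stationary point of Percival's action functional. -/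
theorem stmt12 (Fa : ℝ → ℝ → ℝ)
    (hFa : ContDiff ℝ 1 (fun p : ℝ × ℝ => Fa p.1 p.2))
    (hper : ∀ x y : ℝ, Fa (x + 1) (y + 1) = Fa x y)
    (ω : ℝ) (hω : ω ∈ Set.Ioo (0 : ℝ) 1) (hirr : Irrational ω)
    (θ : ℝ → ℝ) (hθc : Continuous θ) (hθper : ∀ t, θ (t + 1) = θ t + 1)
    (ψ : ℝ → ℝ) (hψ : ∀ t, ψ t = -deriv (fun x : ℝ => Fa x (θ (t + ω))) (θ t))
    (horbit : ∀ t, ψ (t + ω) = deriv (fun y : ℝ => Fa (θ t) y) (θ (t + ω)))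
    (η : ℝ → ℝ) (hηc : Continuous η) (hηper : ∀ t, η (t + 1) = η t) :
    HasDerivAt
      (fun ε : ℝ =>
        ∫ t in (0 : ℝ)..1, Fa (θ t + ε * η t) (θ (t + ω) + ε * η (t + ω)))
      0 0 := by
  set f : ℝ × ℝ → ℝ := fun p => Fa p.1 p.2 with hf
  have hfd : Differentiable ℝ f := hFa.differentiable one_ne_zero
  have hfc : Continuous (fun p => fderiv ℝ f p) := hFa.continuous_fderiv one_ne_zero
  -- pointwise derivative along lines
  have key : ∀ (a b u v x : ℝ),
      HasDerivAt (fun ε : ℝ => f (a + ε * u, b + ε * v))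
        (fderiv ℝ f (a + x * u, b + x * v) (u, v)) x := by
    intro a b u v x
    have h1 : HasDerivAt (fun ε : ℝ => ((a + ε * u, b + ε * v) : ℝ × ℝ)) (u, v) x := by
      simpa using (((hasDerivAt_id x).mul_const u).const_add a).prodMk
        (((hasDerivAt_id x).mul_const v).const_add b)
    exact (hfd _).hasFDerivAt.comp_hasDerivAt x h1
  -- partial derivatives via fderiv
  have hd1 : ∀ a b : ℝ, deriv (fun x => Fa x b) a = fderiv ℝ f (a, b) (1, 0) := by
    intro a b
    have h1 : HasDerivAt (fun x : ℝ => ((x, b) : ℝ × ℝ)) (1, 0) a :=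
      (hasDerivAt_id a).prodMk (hasDerivAt_const a b)
    exact ((hfd (a, b)).hasFDerivAt.comp_hasDerivAt a h1).deriv
  have hd2 : ∀ a b : ℝ, deriv (fun y => Fa a y) b = fderiv ℝ f (a, b) (0, 1) := by
    intro a b
    have h1 : HasDerivAt (fun y : ℝ => ((a, y) : ℝ × ℝ)) (0, 1) b :=
      (hasDerivAt_const b a).prodMk (hasDerivAt_id b)
    exact ((hfd (a, b)).hasFDerivAt.comp_hasDerivAt b h1).deriv
  have hlin : ∀ (p : ℝ × ℝ) (u v : ℝ),
      fderiv ℝ f p (u, v) = u * fderiv ℝ f p (1, 0) + v * fderiv ℝ f p (0, 1) := by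
    intro p u v
    have : ((u, v) : ℝ × ℝ) = u • ((1 : ℝ), (0 : ℝ)) + v • (0, 1) := by simp [Prod.ext_iff]
    rw [this, map_add, map_smul, map_smul, smul_eq_mul, smul_eq_mul]
  -- translation invariance of fderiv
  have htrans : ∀ p : ℝ × ℝ, fderiv ℝ f (p + (1, 1)) = fderiv ℝ f p := by
    intro p
    have h2 : (fun q : ℝ × ℝ => f (q + (1, 1))) = f := by
      funext q; exact hper q.1 q.2
    have h1 : HasFDerivAt (fun q : ℝ × ℝ => f (q + (1, 1)))
        ((fderiv ℝ f (p + (1, 1))).comp (ContinuousLinearMap.id ℝ (ℝ × ℝ))) p :=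
      (hfd _).hasFDerivAt.comp p ((hasFDerivAt_id p).add_const (1, 1))
    rw [h2, ContinuousLinearMap.comp_id] at h1
    exact h1.fderiv.symm
  -- ψ in fderiv form, continuity and periodicity
  have hψ' : ∀ t, ψ t = -(fderiv ℝ f (θ t, θ (t + ω)) (1, 0)) := by
    intro t; rw [hψ t, hd1]
  have hψc : Continuous ψ := by
    have : Continuous fun t => fderiv ℝ f (θ t, θ (t + ω)) :=
      hfc.comp (hθc.prodMk (hθc.comp (continuous_id.add continuous_const)))
    have := (this.clm_apply continuous_const (g := fun _ => ((1 : ℝ), (0 : ℝ)))).neg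
    rw [show ψ = _ from funext hψ']; exact this
  have hψper : ∀ t, ψ (t + 1) = ψ t := by
    intro t
    have e1 : θ (t + 1 + ω) = θ (t + ω) + 1 := by
      rw [show t + 1 + ω = t + ω + 1 by ring, hθper]
    rw [hψ' (t + 1), hψ' t, hθper, e1,
      show ((θ t + 1, θ (t + ω) + 1) : ℝ × ℝ) = (θ t, θ (t + ω)) + (1, 1) by simp [Prod.ext_iff],
      htrans]
  -- the function h and its integral shift
  set h : ℝ → ℝ := fun t => ψ t * η t with hh
  have hhc : Continuous h := hψc.mul hηc
  have hhper : Function.Periodic h 1 := fun t => by simp [hh, hψper, hηper]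
  -- derivative under the integral sign
  set F' : ℝ → ℝ → ℝ := fun x t =>
    fderiv ℝ f (θ t + x * η t, θ (t + ω) + x * η (t + ω)) (η t, η (t + ω)) with hF'
  have hcont : ∀ x : ℝ, Continuous fun t => F' x t := by
    intro x
    have hc1 : Continuous fun t => ((θ t + x * η t, θ (t + ω) + x * η (t + ω)) : ℝ × ℝ) :=
      (hθc.add (continuous_const.mul hηc)).prodMk
        ((hθc.comp (continuous_id.add continuous_const)).add
          (continuous_const.mul (hηc.comp (continuous_id.add continuous_const))))
    exact (hfc.comp hc1).clm_apply ((hηc.prodMk (hηc.comp (continuous_id.add continuous_const))))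
  -- bound on compact set
  obtain ⟨C, hC⟩ : ∃ C, ∀ q ∈ (Metric.closedBall (0:ℝ) 1) ×ˢ (Set.uIcc (0:ℝ) 1),
      ‖(fun q : ℝ × ℝ => F' q.1 q.2) q‖ ≤ C := by
    apply ((isCompact_closedBall (0:ℝ) 1).prod isCompact_uIcc).exists_bound_of_continuousOn
    apply Continuous.continuousOn
    have hc1 : Continuous fun q : ℝ × ℝ =>
        ((θ q.2 + q.1 * η q.2, θ (q.2 + ω) + q.1 * η (q.2 + ω)) : ℝ × ℝ) := by
      fun_prop
    exact (hfc.comp hc1).clm_apply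
      ((hηc.comp continuous_snd).prodMk (hηc.comp (continuous_snd.add continuous_const)))
  have hFint : ∀ x : ℝ, Continuous fun t => Fa (θ t + x * η t) (θ (t + ω) + x * η (t + ω)) := by
    intro x
    have hc1 : Continuous fun t => ((θ t + x * η t, θ (t + ω) + x * η (t + ω)) : ℝ × ℝ) :=
      (hθc.add (continuous_const.mul hηc)).prodMk
        ((hθc.comp (continuous_id.add continuous_const)).add
          (continuous_const.mul (hηc.comp (continuous_id.add continuous_const))))
    exact hFa.continuous.comp hc1
  have main := intervalIntegral.hasDerivAt_integral_of_dominated_loc_of_deriv_le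
    (F := fun x t => Fa (θ t + x * η t) (θ (t + ω) + x * η (t + ω))) (F' := F')
    (x₀ := (0:ℝ)) (a := (0:ℝ)) (b := 1) (bound := fun _ => C) (μ := MeasureTheory.volume)
    (Metric.ball_mem_nhds (0:ℝ) one_pos)
    (Filter.Eventually.of_forall fun x => (hFint x).aestronglyMeasurable)
    ((hFint 0).intervalIntegrable 0 1)
    ((hcont 0).aestronglyMeasurable)
    (Filter.Eventually.of_forall fun t ht => fun x hx => by
      exact hC (x, t) ⟨Metric.ball_subset_closedBall hx,
        Set.Ioc_subset_Icc_self.trans (by rw [Set.uIcc_of_le (by norm_num : (0:ℝ) ≤ 1)]) <|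
          (by simpa [Set.uIoc_of_le (by norm_num : (0:ℝ) ≤ 1)] using ht)⟩)
    (intervalIntegrable_const)
    (Filter.Eventually.of_forall fun t ht => fun x hx => key (θ t) (θ (t + ω)) (η t) (η (t + ω)) x)
  -- compute the value of the derivative integral
  have hval : (∫ t in (0:ℝ)..1, F' 0 t) = 0 := by
    have hF'0 : ∀ t, F' 0 t = h (t + ω) - h t := by
      intro t
      have := hlin (θ t, θ (t + ω)) (η t) (η (t + ω))
      simp only [hF', zero_mul, add_zero]
      rw [this, ← hd1, ← hd2, ← horbit t]
      have : deriv (fun x => Fa x (θ (t + ω))) (θ t) = -ψ t := by rw [hψ t]; ring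
      rw [this, hh]; ring
    have i1 : IntervalIntegrable (fun t => h (t + ω)) MeasureTheory.volume 0 1 :=
      (hhc.comp (continuous_id.add continuous_const)).intervalIntegrable 0 1
    have hint : (∫ t in (0:ℝ)..1, F' 0 t)
        = (∫ t in (0:ℝ)..1, h (t + ω)) - ∫ t in (0:ℝ)..1, h t := by
      rw [← intervalIntegral.integral_sub i1 (hhc.intervalIntegrable 0 1)]
      exact intervalIntegral.integral_congr fun t _ => hF'0 t
    rw [hint, intervalIntegral.integral_comp_add_right h ω]
    have h2 := hhper.intervalIntegral_add_eq ω 0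
    rw [show (0:ℝ) + ω = ω by ring, show (1:ℝ) + ω = ω + 1 by ring, h2, zero_add, sub_self]
  have := main.2
  rw [hval] at this
  exact this
end
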